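/- Let H be a real Hilbert space, A : H → H bounded self-adjoint positive semidefinite, s a nonnegative integer, and e, ρ : [0,T] → H continuously differentiable satisfying A^{s+1} e'(t) + A^s e(t) = A^s ρ(t) for all t. Then for all t ∈ [0,T], the discrete seminorm |v| = ⟨A^s v, v⟩^{1/2} satisfies |e(t)|² ≤ |e(0)|² + 2·|ρ(t)|·|e(t)| + 2·|ρ(0)|·|e(0)| + 2·∫_0^t |ρ'(s)|·|e(s)| ds. -/

import Mathlib

/-!
Along a solution, `⟪Aˢ e, e'⟫ = ⟪Aˢ ρ, e'⟫ - ⟪Aˢ⁺¹ e', e'⟫ ≤ ⟪Aˢ ρ, e'⟫`, because powers of a positive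
operator are positive. Hence the modified energy `⟪Aˢ e, e⟫ - 2 ⟪Aˢ ρ, e⟫` has derivative at most
`-2 ⟪Aˢ ρ', e⟫`, i.e. the time derivative is moved from `e` onto `ρ`. Integrating, and bounding the
three remaining cross terms by the Cauchy–Schwarz inequality for the positive semidefinite form
`⟪Aˢ ·, ·⟫`, gives the estimate.
-/

open scoped RealInnerProductSpace

namespace ContinuousLinearMap

variable {𝕜 E : Type*} [RCLike 𝕜] [NormedAddCommGroup E] [InnerProductSpace 𝕜 E]

theorem IsPositive.pow {T : E →L[𝕜] E} (hT : T.IsPositive) (n : ℕ) : (T ^ n).IsPositive := by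
  have hsym (k : ℕ) : ((T ^ k : E →L[𝕜] E) : E →ₗ[𝕜] E).IsSymmetric := by
    simpa only [toLinearMap_pow] using hT.isSymmetric.pow k
  refine ⟨hsym n, fun x => ?_⟩
  obtain ⟨k, rfl | rfl⟩ := n.even_or_odd'
  · have hsplit : (T ^ (2 * k)) x = (T ^ k) ((T ^ k) x) := by rw [two_mul, pow_add]; rfl
    rw [reApplyInnerSelf_apply, hsplit, (hsym k).apply_clm]
    exact inner_self_nonneg
  · have hsplit : (T ^ (2 * k + 1)) x = (T ^ k) (T ((T ^ k) x)) := by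
      rw [show 2 * k + 1 = k + (1 + k) by ring, pow_add, pow_add, pow_one]; rfl
    rw [reApplyInnerSelf_apply, hsplit, (hsym k).apply_clm]
    exact hT.re_inner_nonneg_left _

variable {H : Type*} [NormedAddCommGroup H] [InnerProductSpace ℝ H]

theorem IsPositive.abs_inner_le_sqrt_mul_sqrt {T : H →L[ℝ] H} (hT : T.IsPositive) (x y : H) :
    |⟪T x, y⟫| ≤ √⟪T x, x⟫ * √⟪T y, y⟫ := by
  have hcs := LinearMap.BilinForm.apply_mul_apply_le_of_forall_zero_le
    ((innerₗ H) ∘ₗ (T : H →ₗ[ℝ] H)) hT.inner_nonneg_left x y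
  simp only [LinearMap.coe_comp, Function.comp_apply, coe_coe, innerₗ_apply_apply] at hcs
  rw [hT.inner_left_eq_inner_right y x, real_inner_comm (T x) y] at hcs
  rw [← Real.sqrt_mul (hT.inner_nonneg_left x)]
  exact Real.abs_le_sqrt (by rwa [sq])

end ContinuousLinearMap

section Energy

variable {H : Type*} [NormedAddCommGroup H] [InnerProductSpace ℝ H] {B : H →L[ℝ] H}

theorem sub_le_integral_of_inner_apply_deriv_le (hB : B.IsPositive) {e ρ : ℝ → H}
    (he : Differentiable ℝ e) (hρ : ContDiff ℝ 1 ρ)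
    (hdiss : ∀ τ, ⟪B (e τ), deriv e τ⟫ ≤ ⟪B (ρ τ), deriv e τ⟫) {t : ℝ} (ht : 0 ≤ t) :
    (⟪B (e t), e t⟫ - 2 * ⟪B (ρ t), e t⟫) - (⟪B (e 0), e 0⟫ - 2 * ⟪B (ρ 0), e 0⟫)
      ≤ 2 * ∫ τ in 0..t, √⟪B (deriv ρ τ), deriv ρ τ⟫ * √⟪B (e τ), e τ⟫ := by
  have hderiv (τ : ℝ) : HasDerivAt (fun x => ⟪B (e x), e x⟫ - 2 * ⟪B (ρ x), e x⟫)
      (2 * (⟪B (e τ), deriv e τ⟫ - ⟪B (ρ τ), deriv e τ⟫) - 2 * ⟪B (deriv ρ τ), e τ⟫) τ := by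
    have hBe := B.hasFDerivAt.comp_hasDerivAt τ (he τ).hasDerivAt
    have hBρ := B.hasFDerivAt.comp_hasDerivAt τ ((hρ.differentiable one_ne_zero) τ).hasDerivAt
    refine ((hBe.inner ℝ (he τ).hasDerivAt).sub
      ((hBρ.inner ℝ (he τ).hasDerivAt).const_mul 2)).congr_deriv ?_
    rw [Function.comp_apply, Function.comp_apply, hB.inner_left_eq_inner_right (deriv e τ),
      real_inner_comm (B (e τ))]
    ring
  have hcont : Continuous fun τ => √⟪B (deriv ρ τ), deriv ρ τ⟫ * √⟪B (e τ), e τ⟫ := by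
    have := hρ.continuous_deriv le_rfl
    have := he.continuous
    fun_prop
  rw [← intervalIntegral.integral_const_mul]
  refine intervalIntegral.sub_le_integral_of_hasDeriv_right_of_le ht
    (fun τ _ => (hderiv τ).continuousAt.continuousWithinAt)
    (fun τ _ => (hderiv τ).hasDerivWithinAt) (hcont.const_mul 2).integrableOn_Icc
    (fun τ _ => ?_)
  have hcs := neg_le_of_abs_le (hB.abs_inner_le_sqrt_mul_sqrt (deriv ρ τ) (e τ))
  linarith [hdiss τ]

theorem inner_apply_self_le_of_inner_apply_deriv_le (hB : B.IsPositive) {e ρ : ℝ → H}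
    (he : Differentiable ℝ e) (hρ : ContDiff ℝ 1 ρ)
    (hdiss : ∀ τ, ⟪B (e τ), deriv e τ⟫ ≤ ⟪B (ρ τ), deriv e τ⟫) {t : ℝ} (ht : 0 ≤ t) :
    ⟪B (e t), e t⟫ ≤ ⟪B (e 0), e 0⟫ + 2 * √⟪B (ρ t), ρ t⟫ * √⟪B (e t), e t⟫
      + 2 * √⟪B (ρ 0), ρ 0⟫ * √⟪B (e 0), e 0⟫
      + 2 * ∫ τ in 0..t, √⟪B (deriv ρ τ), deriv ρ τ⟫ * √⟪B (e τ), e τ⟫ := by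
  have henergy := sub_le_integral_of_inner_apply_deriv_le hB he hρ hdiss ht
  have hcs_t := le_of_abs_le (hB.abs_inner_le_sqrt_mul_sqrt (ρ t) (e t))
  have hcs_0 := neg_le_of_abs_le (hB.abs_inner_le_sqrt_mul_sqrt (ρ 0) (e 0))
  linarith

end Energy

theorem negative_norm_energy_estimate_general
    {H : Type*} [NormedAddCommGroup H] [InnerProductSpace ℝ H]
    (A : H →L[ℝ] H)
    (hsa : ∀ v w : H, (inner ℝ (A v) w : ℝ) = inner ℝ v (A w))
    (hpsd : ∀ v : H, 0 ≤ (inner ℝ (A v) v : ℝ))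
    (s : ℕ) (T : ℝ)
    (e ρ : ℝ → H) (he : ContDiff ℝ 1 e) (hρ : ContDiff ℝ 1 ρ)
    (heq : ∀ t : ℝ, (A ^ (s + 1)) (deriv e t) + (A ^ s) (e t) = (A ^ s) (ρ t)) :
    ∀ t ∈ Set.Icc (0:ℝ) T,
      Real.sqrt (inner ℝ ((A ^ s) (e t)) (e t) : ℝ) ^ 2
        ≤ Real.sqrt (inner ℝ ((A ^ s) (e 0)) (e 0) : ℝ) ^ 2
          + 2 * Real.sqrt (inner ℝ ((A ^ s) (ρ t)) (ρ t) : ℝ)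
              * Real.sqrt (inner ℝ ((A ^ s) (e t)) (e t) : ℝ)
          + 2 * Real.sqrt (inner ℝ ((A ^ s) (ρ 0)) (ρ 0) : ℝ)
              * Real.sqrt (inner ℝ ((A ^ s) (e 0)) (e 0) : ℝ)
          + 2 * ∫ τ in (0:ℝ)..t,
              Real.sqrt (inner ℝ ((A ^ s) (deriv ρ τ)) (deriv ρ τ) : ℝ)
                * Real.sqrt (inner ℝ ((A ^ s) (e τ)) (e τ) : ℝ) := by
  intro t ht
  have hA : A.IsPositive := A.isPositive_iff.2 ⟨hsa, hpsd⟩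
  have hdiss (τ : ℝ) : ⟪(A ^ s) (e τ), deriv e τ⟫ ≤ ⟪(A ^ s) (ρ τ), deriv e τ⟫ := by
    rw [← heq τ, inner_add_left]
    linarith [(hA.pow (s + 1)).inner_nonneg_left (deriv e τ)]
  rw [Real.sq_sqrt ((hA.pow s).inner_nonneg_left _), Real.sq_sqrt ((hA.pow s).inner_nonneg_left _)]
  exact inner_apply_self_le_of_inner_apply_deriv_le (hA.pow s) (he.differentiable one_ne_zero) hρ
    hdiss ht.1

theorem negative_norm_energy_estimate
    {H : Type*} [NormedAddCommGroup H] [InnerProductSpace ℝ H] [CompleteSpace H]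
    (A : H →L[ℝ] H)
    (hsa : ∀ v w : H, (inner ℝ (A v) w : ℝ) = inner ℝ v (A w))
    (hpsd : ∀ v : H, 0 ≤ (inner ℝ (A v) v : ℝ))
    (s : ℕ) (T : ℝ) (hT : 0 ≤ T)
    (e ρ : ℝ → H) (he : ContDiff ℝ 1 e) (hρ : ContDiff ℝ 1 ρ)
    (heq : ∀ t : ℝ, (A ^ (s + 1)) (deriv e t) + (A ^ s) (e t) = (A ^ s) (ρ t)) :
    ∀ t ∈ Set.Icc (0:ℝ) T,
      Real.sqrt (inner ℝ ((A ^ s) (e t)) (e t) : ℝ) ^ 2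
        ≤ Real.sqrt (inner ℝ ((A ^ s) (e 0)) (e 0) : ℝ) ^ 2
          + 2 * Real.sqrt (inner ℝ ((A ^ s) (ρ t)) (ρ t) : ℝ)
              * Real.sqrt (inner ℝ ((A ^ s) (e t)) (e t) : ℝ)
          + 2 * Real.sqrt (inner ℝ ((A ^ s) (ρ 0)) (ρ 0) : ℝ)
              * Real.sqrt (inner ℝ ((A ^ s) (e 0)) (e 0) : ℝ)
          + 2 * ∫ τ in (0:ℝ)..t,
              Real.sqrt (inner ℝ ((A ^ s) (deriv ρ τ)) (deriv ρ τ) : ℝ)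
                * Real.sqrt (inner ℝ ((A ^ s) (e τ)) (e τ) : ℝ) :=
  negative_norm_energy_estimate_general A hsa hpsd s T e ρ he hρ heq
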